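/- Let Λ be a finite set, μ a probability distribution on Λ, and for each setting x ∈ {0,1} let a_x : Λ → ℝ and for each y ∈ {0,1} let b_y : Λ → ℝ be response functions taking values in [−1,1]. Define the correlators E(x,y) = Σ_{λ∈Λ} μ(λ)·a_x(λ)·b_y(λ). Then |E(0,0) + E(0,1) + E(1,0) − E(1,1)| ≤ 2. -/
import Mathlib


/-- the CHSH Bell inequality for local-hidden-variable models. -/
theorem chsh_lhv_bound (Λ : Type*) [Fintype Λ] (μ : Λ → ℝ)
    (hμ0 : ∀ l, 0 ≤ μ l) (hμ1 : ∑ l, μ l = 1)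
    (a b : Fin 2 → Λ → ℝ)
    (ha : ∀ x l, a x l ∈ Set.Icc (-1 : ℝ) 1)
    (hb : ∀ y l, b y l ∈ Set.Icc (-1 : ℝ) 1)
    (E : Fin 2 → Fin 2 → ℝ)
    (hE : ∀ x y, E x y = ∑ l, μ l * a x l * b y l) :
    |E 0 0 + E 0 1 + E 1 0 - E 1 1| ≤ 2 := by
  simp only [hE, ← Finset.sum_add_distrib, ← Finset.sum_sub_distrib]
  have key : ∀ l, |μ l * a 0 l * b 0 l + μ l * a 0 l * b 1 l + μ l * a 1 l * b 0 l
      - μ l * a 1 l * b 1 l| ≤ 2 * μ l := by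
    intro l
    obtain ⟨h1, h2⟩ := ha 0 l
    obtain ⟨h3, h4⟩ := ha 1 l
    obtain ⟨h5, h6⟩ := hb 0 l
    obtain ⟨h7, h8⟩ := hb 1 l
    have hm := hμ0 l
    have hS : |a 0 l * b 0 l + a 0 l * b 1 l + a 1 l * b 0 l - a 1 l * b 1 l| ≤ 2 := by
      rw [abs_le]
      constructor <;> nlinarith [mul_nonneg (sub_nonneg.2 h2) (sub_nonneg.2 h6),
        mul_nonneg (sub_nonneg.2 h2) (sub_nonneg.2 h8),
        mul_nonneg (sub_nonneg.2 h4) (sub_nonneg.2 h6),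
        mul_nonneg (sub_nonneg.2 h4) (sub_nonneg.2 h8),
        mul_nonneg (by linarith : (0:ℝ) ≤ a 0 l + 1) (by linarith : (0:ℝ) ≤ b 0 l + 1),
        mul_nonneg (by linarith : (0:ℝ) ≤ a 0 l + 1) (by linarith : (0:ℝ) ≤ b 1 l + 1),
        mul_nonneg (by linarith : (0:ℝ) ≤ a 1 l + 1) (by linarith : (0:ℝ) ≤ b 0 l + 1),
        mul_nonneg (by linarith : (0:ℝ) ≤ a 1 l + 1) (by linarith : (0:ℝ) ≤ b 1 l + 1),
        mul_nonneg (sub_nonneg.2 h2) (by linarith : (0:ℝ) ≤ b 0 l + 1),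
        mul_nonneg (by linarith : (0:ℝ) ≤ a 0 l + 1) (sub_nonneg.2 h6)]
    calc |μ l * a 0 l * b 0 l + μ l * a 0 l * b 1 l + μ l * a 1 l * b 0 l - μ l * a 1 l * b 1 l|
        = μ l * |a 0 l * b 0 l + a 0 l * b 1 l + a 1 l * b 0 l - a 1 l * b 1 l| := by
          rw [show μ l * a 0 l * b 0 l + μ l * a 0 l * b 1 l + μ l * a 1 l * b 0 l
              - μ l * a 1 l * b 1 l = μ l * (a 0 l * b 0 l + a 0 l * b 1 l + a 1 l * b 0 l
              - a 1 l * b 1 l) from by ring, abs_mul, abs_of_nonneg hm]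
      _ ≤ μ l * 2 := mul_le_mul_of_nonneg_left hS hm
      _ = 2 * μ l := by ring
  calc |∑ l, (μ l * a 0 l * b 0 l + μ l * a 0 l * b 1 l + μ l * a 1 l * b 0 l
      - μ l * a 1 l * b 1 l)| ≤ ∑ l, (2 * μ l) :=
        (Finset.abs_sum_le_sum_abs _ _).trans (Finset.sum_le_sum fun l _ => key l)
    _ = 2 := by rw [← Finset.mul_sum, hμ1, mul_one]
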